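/- arXiv:1906.07593 — 3 statements merged into one kernel-verified Lean document; each statement's English description precedes it below -/
import Mathlib

section
/- Let Φ : ℝⁿ → [0,∞) be an n-dimensional N-function. Then there exist a strictly convex n-dimensional N-function Ψ : ℝⁿ → [0,∞) and a constant c > 0 such that Φ(ξ) ≤ Ψ(ξ) ≤ Φ((1+c)ξ) for all ξ ∈ ℝⁿ; in particular Ψ is equivalent to Φ. -/
open MeasureTheory Filter Topology
open scoped RealInnerProductSpace ENNReal

/-- An `n`-dimensional (finite-valued) Young function: an even, convex function
`Φ : ℝⁿ → [0,∞)` with `Φ(0) = 0` such that for every `t > 0` the sublevel set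
`{ξ : Φ ξ < t}` is bounded and is a neighborhood of `0`. -/
structure IsYoungFunction {n : ℕ} (Φ : EuclideanSpace ℝ (Fin n) → ℝ) : Prop where
  nonneg : ∀ ξ, 0 ≤ Φ ξ
  even : ∀ ξ, Φ (-ξ) = Φ ξ
  convex : ConvexOn ℝ Set.univ Φ
  map_zero : Φ 0 = 0
  sublevel_bounded : ∀ t > 0, Bornology.IsBounded {ξ | Φ ξ < t}
  sublevel_mem_nhds : ∀ t > 0, {ξ | Φ ξ < t} ∈ 𝓝 (0 : EuclideanSpace ℝ (Fin n))

/-- An `n`-dimensional `N`-function: a finite-valued Young function vanishing only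
at `0`, with `Φ(ξ)/|ξ| → ∞` as `|ξ| → ∞` and `Φ(ξ)/|ξ| → 0` as `|ξ| → 0`. -/
structure IsNFunction {n : ℕ} (Φ : EuclideanSpace ℝ (Fin n) → ℝ)
    extends IsYoungFunction Φ : Prop where
  eq_zero : ∀ ξ, Φ ξ = 0 → ξ = 0
  tendsto_atTop : Tendsto (fun ξ => Φ ξ / ‖ξ‖)
    (Bornology.cobounded (EuclideanSpace ℝ (Fin n))) atTop
  tendsto_zero : Tendsto (fun ξ => Φ ξ / ‖ξ‖)
    (𝓝[≠] (0 : EuclideanSpace ℝ (Fin n))) (𝓝 0)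

/-!
Add to `Φ` a strictly convex radial term `h ‖ξ‖` with `0 ≤ h ‖ξ‖ ≤ Φ ξ`; then
`Φ ≤ Ψ ≤ 2Φ ≤ Φ(2·)`. If `m t` is the minimum of `Φ` on the sphere of radius `t`, convexity and
`Φ 0 = 0` make `m t / t` nondecreasing, and compactness of the sphere makes it positive. Hence
`m t / (1 + t)`, the product of `m t / t` with the strictly increasing `t / (1 + t)`, is strictly
increasing; its primitive `h` is strictly convex with `h r ≤ r * m r / (1 + r) ≤ m r`, and since
the Euclidean norm is strictly convex, so is `h ‖·‖`.
-/

open Set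

section ConvexOnMapZero

variable {E : Type*} [AddCommGroup E] [Module ℝ E] {f : E → ℝ}

lemma ConvexOn.map_smul_le_mul_of_map_zero (hf : ConvexOn ℝ univ f) (h0 : f 0 = 0) {t : ℝ}
    (ht0 : 0 ≤ t) (ht1 : t ≤ 1) (x : E) : f (t • x) ≤ t * f x := by
  simpa [h0] using hf.2 (mem_univ x) (mem_univ 0) ht0 (sub_nonneg.2 ht1) (by ring)

lemma ConvexOn.mul_le_map_smul_of_map_zero (hf : ConvexOn ℝ univ f) (h0 : f 0 = 0) {t : ℝ}
    (ht : 1 ≤ t) (x : E) : t * f x ≤ f (t • x) := by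
  have ht0 : 0 < t := one_pos.trans_le ht
  have h := hf.map_smul_le_mul_of_map_zero h0 (inv_nonneg.2 ht0.le) (inv_le_one_of_one_le₀ ht)
    (t • x)
  rw [inv_smul_smul₀ ht0.ne'] at h
  rwa [← le_inv_mul_iff₀ ht0]

end ConvexOnMapZero

section SphereInf

variable {E : Type*} [NormedAddCommGroup E] {Φ : E → ℝ}

noncomputable def sphereInf (Φ : E → ℝ) (r : ℝ) : ℝ :=
  sInf (Φ '' Metric.sphere 0 r)

lemma sphereInf_zero : sphereInf Φ 0 = Φ 0 := by
  simp [sphereInf]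

lemma sphereInf_nonneg (hΦ : 0 ≤ Φ) (r : ℝ) : 0 ≤ sphereInf Φ r :=
  Real.sInf_nonneg (by rintro _ ⟨ξ, -, rfl⟩; exact hΦ ξ)

lemma sphereInf_le (hΦ : 0 ≤ Φ) {r : ℝ} {ξ : E} (hξ : ‖ξ‖ = r) : sphereInf Φ r ≤ Φ ξ :=
  csInf_le ⟨0, by rintro _ ⟨η, -, rfl⟩; exact hΦ η⟩ ⟨ξ, mem_sphere_zero_iff_norm.2 hξ, rfl⟩

variable [NormedSpace ℝ E] [Nontrivial E]

lemma sphereInf_pos [ProperSpace E] (hcont : Continuous Φ) (hpos : ∀ ξ ≠ 0, 0 < Φ ξ) {r : ℝ}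
    (hr : 0 < r) : 0 < sphereInf Φ r := by
  obtain ⟨ξ, hξ, hξmin⟩ := ((isCompact_sphere (0 : E) r).image hcont).sInf_mem
    ((NormedSpace.sphere_nonempty.2 hr.le).image Φ)
  rw [sphereInf, ← hξmin]
  refine hpos ξ fun hξ0 => hr.ne' ?_
  rwa [hξ0, mem_sphere_zero_iff_norm, norm_zero, eq_comm] at hξ

lemma monotoneOn_sphereInf_div (hconv : ConvexOn ℝ univ Φ) (h0 : Φ 0 = 0) (hΦ : 0 ≤ Φ) :
    MonotoneOn (fun r => sphereInf Φ r / r) (Ioi 0) := by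
  intro r (hr : 0 < r) s (hs : 0 < s) hrs
  rw [div_le_div_iff₀ hr hs, ← div_le_iff₀ hr]
  refine le_csInf ((NormedSpace.sphere_nonempty.2 hs.le).image Φ) ?_
  rintro _ ⟨ξ, hξ, rfl⟩
  rw [mem_sphere_zero_iff_norm] at hξ
  have hrξ : ‖(r / s) • ξ‖ = r := by
    rw [norm_smul, Real.norm_of_nonneg (div_nonneg hr.le hs.le), hξ, div_mul_cancel₀ _ hs.ne']
  calc sphereInf Φ r * s / r ≤ Φ ((r / s) • ξ) * s / r := by
        gcongr; exact sphereInf_le hΦ hrξ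
    _ ≤ (r / s * Φ ξ) * s / r := by
        gcongr
        exact hconv.map_smul_le_mul_of_map_zero h0 (div_nonneg hr.le hs.le)
          (div_le_one_of_le₀ hrs hs.le) ξ
    _ = Φ ξ := by field_simp

end SphereInf

section IntegralOfStrictMono

variable {G : ℝ → ℝ}

lemma StrictMonoOn.mul_lt_integral {x y : ℝ} (hG : StrictMonoOn G (Icc x y)) (hxy : x < y) :
    (y - x) * G x < ∫ t in x..y, G t := by
  have hint : IntervalIntegrable G volume x y :=
    (hG.monotoneOn.mono (uIcc_of_le hxy.le).subset).intervalIntegrable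
  have hpos : 0 < ∫ t in x..y, (G t - G x) :=
    intervalIntegral.intervalIntegral_pos_of_pos_on (hint.sub intervalIntegrable_const)
      (fun t ht => sub_pos.2 (hG (left_mem_Icc.2 hxy.le) (Ioo_subset_Icc_self ht) ht.1)) hxy
  rw [intervalIntegral.integral_sub hint intervalIntegrable_const,
    intervalIntegral.integral_const, smul_eq_mul] at hpos
  linarith

lemma StrictMonoOn.integral_lt_mul {x y : ℝ} (hG : StrictMonoOn G (Icc x y)) (hxy : x < y) :
    ∫ t in x..y, G t < (y - x) * G y := by
  have hint : IntervalIntegrable G volume x y :=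
    (hG.monotoneOn.mono (uIcc_of_le hxy.le).subset).intervalIntegrable
  have hpos : 0 < ∫ t in x..y, (G y - G t) :=
    intervalIntegral.intervalIntegral_pos_of_pos_on (intervalIntegrable_const.sub hint)
      (fun t ht => sub_pos.2 (hG (Ioo_subset_Icc_self ht) (right_mem_Icc.2 hxy.le) ht.2)) hxy
  rw [intervalIntegral.integral_sub intervalIntegrable_const hint,
    intervalIntegral.integral_const, smul_eq_mul] at hpos
  linarith

variable {a : ℝ}

lemma MonotoneOn.intervalIntegrable_of_mem_Ici (hG : MonotoneOn G (Ici a)) ⦃x y : ℝ⦄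
    (hx : a ≤ x) (hy : a ≤ y) : IntervalIntegrable G volume x y :=
  (hG.mono (ordConnected_Ici.uIcc_subset hx hy)).intervalIntegrable

lemma StrictMonoOn.strictConvexOn_integral (hG : StrictMonoOn G (Ici a)) :
    StrictConvexOn ℝ (Ici a) (fun r => ∫ t in a..r, G t) := by
  have hint := hG.monotoneOn.intervalIntegrable_of_mem_Ici
  refine strictConvexOn_of_slope_strict_mono_adjacent (convex_Ici a) ?_
  intro x y z (hx : a ≤ x) (hz : a ≤ z) hxy hyz
  have hy : a ≤ y := hx.trans hxy.le
  rw [intervalIntegral.integral_interval_sub_left (hint le_rfl hy) (hint le_rfl hx),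
    intervalIntegral.integral_interval_sub_left (hint le_rfl hz) (hint le_rfl hy),
    div_lt_div_iff₀ (sub_pos.2 hxy) (sub_pos.2 hyz)]
  have hleft := (hG.mono (Icc_subset_Ici_iff hxy.le |>.2 hx)).integral_lt_mul hxy
  have hright := (hG.mono (Icc_subset_Ici_iff hyz.le |>.2 hy)).mul_lt_integral hyz
  calc (∫ t in x..y, G t) * (z - y) < (y - x) * G y * (z - y) :=
        mul_lt_mul_of_pos_right hleft (sub_pos.2 hyz)
    _ = (z - y) * G y * (y - x) := by ring
    _ < (∫ t in y..z, G t) * (y - x) := mul_lt_mul_of_pos_right hright (sub_pos.2 hxy)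

lemma StrictMonoOn.strictMonoOn_integral (hG : StrictMonoOn G (Ici a)) (ha : 0 ≤ G a) :
    StrictMonoOn (fun r => ∫ t in a..r, G t) (Ici a) := by
  intro x (hx : a ≤ x) y (hy : a ≤ y) hxy
  have hint := hG.monotoneOn.intervalIntegrable_of_mem_Ici
  have hGx : 0 ≤ G x := ha.trans (hG.monotoneOn self_mem_Ici hx hx)
  have hlow := (hG.mono (Icc_subset_Ici_iff hxy.le |>.2 hx)).mul_lt_integral hxy
  rw [← sub_pos, intervalIntegral.integral_interval_sub_left (hint le_rfl hy) (hint le_rfl hx)]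
  exact (mul_nonneg (sub_nonneg.2 hxy.le) hGx).trans_lt hlow

end IntegralOfStrictMono

lemma StrictConvexOn.comp_norm {E : Type*} [NormedAddCommGroup E] [NormedSpace ℝ E]
    [StrictConvexSpace ℝ E] {h : ℝ → ℝ} (hconv : StrictConvexOn ℝ (Ici 0) h)
    (hmono : StrictMonoOn h (Ici 0)) : StrictConvexOn ℝ univ (fun x : E => h ‖x‖) := by
  refine ⟨convex_univ, fun x _ y _ hxy a b ha hb hab => ?_⟩
  simp only [smul_eq_mul]
  by_cases hnorm : ‖x‖ = ‖y‖
  · rw [← hnorm, ← add_mul, hab, one_mul]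
    exact hmono (norm_nonneg _) (norm_nonneg x) (norm_combo_lt_of_ne le_rfl hnorm.ge hxy ha hb hab)
  · have htri : ‖a • x + b • y‖ ≤ a * ‖x‖ + b * ‖y‖ := by
      simpa [norm_smul, abs_of_pos ha, abs_of_pos hb] using norm_add_le (a • x) (b • y)
    calc h ‖a • x + b • y‖ ≤ h (a * ‖x‖ + b * ‖y‖) :=
          hmono.monotoneOn (norm_nonneg _) (by positivity : (0 : ℝ) ≤ _) htri
      _ < a * h ‖x‖ + b * h ‖y‖ := hconv.2 (norm_nonneg x) (norm_nonneg y) hnorm ha hb hab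

lemma nonneg_of_map_zero_of_pos {α : Type*} [Zero α] {f : α → ℝ} (h0 : f 0 = 0)
    (hpos : ∀ x ≠ 0, 0 < f x) : 0 ≤ f := fun x => by
  rcases eq_or_ne x 0 with rfl | hx
  exacts [h0.ge, (hpos x hx).le]

section RadialMinorant

variable {E : Type*} [NormedAddCommGroup E] {Φ : E → ℝ}

noncomputable def radialMinorant (Φ : E → ℝ) (r : ℝ) : ℝ :=
  ∫ t in 0..r, sphereInf Φ t / (1 + t)

lemma radialMinorant_nonneg (h0 : Φ 0 = 0) (hpos : ∀ ξ ≠ 0, 0 < Φ ξ) {r : ℝ} (hr : 0 ≤ r) :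
    0 ≤ radialMinorant Φ r :=
  intervalIntegral.integral_nonneg hr fun t ht =>
    div_nonneg (sphereInf_nonneg (nonneg_of_map_zero_of_pos h0 hpos) t) (by linarith [ht.1])

variable [NormedSpace ℝ E] [FiniteDimensional ℝ E] [Nontrivial E]

lemma strictMonoOn_sphereInf_div_one_add (hconv : ConvexOn ℝ univ Φ) (h0 : Φ 0 = 0)
    (hpos : ∀ ξ ≠ 0, 0 < Φ ξ) : StrictMonoOn (fun t => sphereInf Φ t / (1 + t)) (Ici 0) := by
  have hΦ := nonneg_of_map_zero_of_pos h0 hpos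
  have hcont : Continuous Φ := continuousOn_univ.1 (hconv.continuousOn isOpen_univ)
  have hsplit {t : ℝ} (ht : 0 < t) :
      sphereInf Φ t / (1 + t) = sphereInf Φ t / t * (t / (1 + t)) := by
    field_simp
  intro x (hx : 0 ≤ x) y (hy : 0 ≤ y) hxy
  have hy0 : 0 < y := hx.trans_lt hxy
  rcases hx.eq_or_lt with rfl | hx0
  · simpa [sphereInf_zero, h0] using div_pos (sphereInf_pos hcont hpos hy0) (by linarith)
  simp only [hsplit hx0, hsplit hy0]
  have hfrac : x / (1 + x) < y / (1 + y) := by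
    rw [div_lt_div_iff₀ (by positivity) (by positivity)]
    linarith
  calc sphereInf Φ x / x * (x / (1 + x)) < sphereInf Φ x / x * (y / (1 + y)) :=
        mul_lt_mul_of_pos_left hfrac (div_pos (sphereInf_pos hcont hpos hx0) hx0)
    _ ≤ sphereInf Φ y / y * (y / (1 + y)) :=
        mul_le_mul_of_nonneg_right (monotoneOn_sphereInf_div hconv h0 hΦ hx0 hy0 hxy.le)
          (by positivity)

lemma radialMinorant_norm_le (hconv : ConvexOn ℝ univ Φ) (h0 : Φ 0 = 0)
    (hpos : ∀ ξ ≠ 0, 0 < Φ ξ) (ξ : E) : radialMinorant Φ ‖ξ‖ ≤ Φ ξ := by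
  rcases eq_or_ne ξ 0 with rfl | hξ
  · simp [radialMinorant, h0]
  have hr : 0 < ‖ξ‖ := norm_pos_iff.2 hξ
  have hdensity := strictMonoOn_sphereInf_div_one_add hconv h0 hpos
  calc radialMinorant Φ ‖ξ‖ ≤ (‖ξ‖ - 0) * (sphereInf Φ ‖ξ‖ / (1 + ‖ξ‖)) :=
        ((hdensity.mono Icc_subset_Ici_self).integral_lt_mul hr).le
    _ ≤ sphereInf Φ ‖ξ‖ := by
        rw [sub_zero, mul_div_left_comm]
        exact mul_le_of_le_one_right (sphereInf_nonneg (nonneg_of_map_zero_of_pos h0 hpos) _)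
          ((div_le_one (by positivity)).2 (by linarith))
    _ ≤ Φ ξ := sphereInf_le (nonneg_of_map_zero_of_pos h0 hpos) rfl

lemma strictConvexOn_radialMinorant_norm [StrictConvexSpace ℝ E] (hconv : ConvexOn ℝ univ Φ)
    (h0 : Φ 0 = 0) (hpos : ∀ ξ ≠ 0, 0 < Φ ξ) :
    StrictConvexOn ℝ univ (fun ξ : E => radialMinorant Φ ‖ξ‖) := by
  have hdensity := strictMonoOn_sphereInf_div_one_add hconv h0 hpos
  exact StrictConvexOn.comp_norm hdensity.strictConvexOn_integral
    (hdensity.strictMonoOn_integral (by simp [sphereInf_zero, h0]))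

end RadialMinorant

lemma IsNFunction.of_le_of_le_mul {n : ℕ} {Φ Ψ : EuclideanSpace ℝ (Fin n) → ℝ}
    (hΦ : IsNFunction Φ) (heven : ∀ ξ, Ψ (-ξ) = Ψ ξ) (hconv : ConvexOn ℝ univ Ψ) {C : ℝ}
    (hC : 0 < C) (hlow : ∀ ξ, Φ ξ ≤ Ψ ξ) (hup : ∀ ξ, Ψ ξ ≤ C * Φ ξ) : IsNFunction Ψ where
  nonneg ξ := (hΦ.nonneg ξ).trans (hlow ξ)
  even := heven
  convex := hconv
  map_zero := le_antisymm (by simpa [hΦ.map_zero] using hup 0) (hΦ.map_zero ▸ hlow 0)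
  sublevel_bounded t ht := (hΦ.sublevel_bounded t ht).subset fun ξ (hξ : Ψ ξ < t) =>
    (hlow ξ).trans_lt hξ
  sublevel_mem_nhds t ht := mem_of_superset (hΦ.sublevel_mem_nhds (t / C) (div_pos ht hC))
    fun ξ (hξ : Φ ξ < t / C) => (hup ξ).trans_lt ((lt_div_iff₀' hC).1 hξ)
  eq_zero ξ hξ := hΦ.eq_zero ξ <| le_antisymm (hξ ▸ hlow ξ) (hΦ.nonneg ξ)
  tendsto_atTop := tendsto_atTop_mono (fun ξ => div_le_div_of_nonneg_right (hlow ξ)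
    (norm_nonneg ξ)) hΦ.tendsto_atTop
  tendsto_zero := by
    refine squeeze_zero (fun ξ => div_nonneg ((hΦ.nonneg ξ).trans (hlow ξ)) (norm_nonneg ξ))
      (fun ξ => ?_) (by simpa using hΦ.tendsto_zero.const_mul C)
    rw [mul_div_assoc']
    exact div_le_div_of_nonneg_right (hup ξ) (norm_nonneg ξ)

/-- Every `n`-dimensional `N`-function admits an equivalent strictly convex
`n`-dimensional `N`-function: there are `Ψ` strictly convex and `c > 0` with
`Φ(ξ) ≤ Ψ(ξ) ≤ Φ((1+c)ξ)` for all `ξ`. -/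
theorem exists_strictConvex_equivalent_NFunction {n : ℕ}
    (Φ : EuclideanSpace ℝ (Fin n) → ℝ) (hΦ : IsNFunction Φ) :
    ∃ (Ψ : EuclideanSpace ℝ (Fin n) → ℝ) (c : ℝ), IsNFunction Ψ ∧
      StrictConvexOn ℝ Set.univ Ψ ∧ 0 < c ∧
      ∀ ξ, Φ ξ ≤ Ψ ξ ∧ Ψ ξ ≤ Φ ((1 + c) • ξ) := by
  rcases subsingleton_or_nontrivial (EuclideanSpace ℝ (Fin n)) with hE | hE
  · refine ⟨Φ, 1, hΦ, ⟨convex_univ, fun x _ y _ hxy => (hxy (Subsingleton.elim x y)).elim⟩,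
      one_pos, fun ξ => ⟨le_rfl, (congrArg Φ (Subsingleton.elim _ _)).le⟩⟩
  have hpos : ∀ ξ ≠ 0, 0 < Φ ξ := fun ξ hξ =>
    (hΦ.nonneg ξ).lt_of_ne' (mt (hΦ.eq_zero ξ) hξ)
  set Ψ := fun ξ => Φ ξ + radialMinorant Φ ‖ξ‖
  have hlow (ξ) : Φ ξ ≤ Ψ ξ :=
    le_add_of_nonneg_right (radialMinorant_nonneg hΦ.map_zero hpos (norm_nonneg ξ))
  have hup (ξ) : Ψ ξ ≤ 2 * Φ ξ := by
    linarith [radialMinorant_norm_le hΦ.convex hΦ.map_zero hpos ξ]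
  have hΨ : StrictConvexOn ℝ univ Ψ :=
    hΦ.convex.add_strictConvexOn (strictConvexOn_radialMinorant_norm hΦ.convex hΦ.map_zero hpos)
  refine ⟨Ψ, 1, hΦ.of_le_of_le_mul (fun ξ => by simp [Ψ, hΦ.even]) hΨ.convexOn two_pos hlow hup,
    hΨ, one_pos, fun ξ => ⟨hlow ξ, (hup ξ).trans ?_⟩⟩
  linarith [hΦ.convex.mul_le_map_smul_of_map_zero hΦ.map_zero (by norm_num : (1 : ℝ) ≤ 1 + 1) ξ]
end

section
/- Let Ω ⊂ ℝⁿ be a bounded measurable set, let Φ : ℝⁿ → [0,∞) be a differentiable n-dimensional N-function with Young conjugate Φ_•, and let V : Ω → ℝⁿ be measurable with ∫_Ω Φ(V/k) dx < ∞ for some k > 0. Then the supremum, over all measurable essentially bounded functions U : Ω → ℝⁿ, of the quantity ∫_Ω U(x) · V(x) dx − ∫_Ω Φ_•(U(x)) dx equals ∫_Ω Φ(V(x)) dx (as an equality in [0, +∞]). -/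
/-!
Young's inequality `U · V ≤ Φ(V) + Φ_•(U)` bounds every term of the supremum by `∫ Φ(V)`.
Conversely, a differentiable convex `Φ` attains equality at `U = ∇Φ(V)`: by the gradient
inequality `Φ(ζ) ≥ Φ(V) + ∇Φ(V) · (ζ - V)`, the point `V` maximises `ζ ↦ ζ · ∇Φ(V) - Φ(ζ)`.
The gradient of a convex function is bounded on balls, so cutting `∇Φ(V)` off outside
`{|V| ≤ m}` gives an admissible `U` whose value is `∫_{|V| ≤ m} Φ(V)`; monotone convergence
as `m → ∞` finishes the proof.
-/

open MeasureTheory Filter Topology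
open scoped RealInnerProductSpace ENNReal

/-- The (real-valued) Young conjugate `Φ_•(η) = sup_ξ (ξ·η − Φ(ξ))`, which is a
finite real number whenever `Φ` is an `n`-dimensional `N`-function. -/
noncomputable def youngConjR {n : ℕ} (Φ : EuclideanSpace ℝ (Fin n) → ℝ)
    (η : EuclideanSpace ℝ (Fin n)) : ℝ :=
  ⨆ ξ : EuclideanSpace ℝ (Fin n), (⟪ξ, η⟫ - Φ ξ)

open scoped Gradient

section MeasureTheory

variable {α : Type*} [MeasurableSpace α] {μ : Measure α}

theorem MeasureTheory.ofReal_integral_le_lintegral_ofReal (f : α → ℝ) :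
    ENNReal.ofReal (∫ x, f x ∂μ) ≤ ∫⁻ x, ENNReal.ofReal (f x) ∂μ := by
  by_cases hf : Integrable f μ
  · rw [integral_eq_lintegral_pos_part_sub_lintegral_neg_part hf]
    exact (ENNReal.ofReal_le_ofReal (sub_le_self _ ENNReal.toReal_nonneg)).trans
      ENNReal.ofReal_toReal_le
  · simp [integral_undef hf]

theorem MeasureTheory.lintegral_eq_iSup_setLIntegral_norm_le {E : Type*}
    [SeminormedAddCommGroup E] (V : α → E) (f : α → ℝ≥0∞) :
    ∫⁻ x, f x ∂μ = ⨆ m : ℕ, ∫⁻ x in {x | ‖V x‖ ≤ m}, f x ∂μ := by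
  have hmono : Monotone fun m : ℕ => {x | ‖V x‖ ≤ m} :=
    fun _ _ hm _ hx => le_trans (α := ℝ) hx (Nat.cast_le.2 hm)
  have hcover : ⋃ m : ℕ, {x | ‖V x‖ ≤ m} = Set.univ :=
    Set.iUnion_eq_univ_iff.2 fun x => ⟨⌈‖V x‖⌉₊, Nat.le_ceil ‖V x‖⟩
  rw [← setLIntegral_iUnion_of_directed f hmono.directed_le, hcover, setLIntegral_univ]

theorem Continuous.integrable_comp_of_ae_norm_le [IsFiniteMeasure μ] {E F : Type*}
    [NormedAddCommGroup E] [ProperSpace E] [NormedAddCommGroup F] {g : E → F}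
    (hg : Continuous g) {U : α → E} (hU : AEStronglyMeasurable U μ) {C : ℝ}
    (hUC : ∀ᵐ x ∂μ, ‖U x‖ ≤ C) :
    Integrable (fun x => g (U x)) μ := by
  obtain ⟨K, hK⟩ :=
    (isCompact_closedBall (0 : E) C).exists_bound_of_continuousOn hg.continuousOn
  refine .of_bound (hg.comp_aestronglyMeasurable hU) K ?_
  filter_upwards [hUC] with x hx using hK _ (mem_closedBall_zero_iff.2 hx)

end MeasureTheory

section ConvexFDeriv

variable {E : Type*} [NormedAddCommGroup E] [NormedSpace ℝ E] {f : E → ℝ}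

theorem ConvexOn.add_fderiv_sub_le (hf : ConvexOn ℝ Set.univ f) {x : E}
    (hfx : DifferentiableAt ℝ f x) (y : E) : f x + fderiv ℝ f x (y - x) ≤ f y := by
  set line : ℝ →ᵃ[ℝ] E := AffineMap.lineMap x y
  have h0 : line 0 = x := AffineMap.lineMap_apply_zero x y
  have h1 : line 1 = y := AffineMap.lineMap_apply_one x y
  have hfx' : HasFDerivAt f (fderiv ℝ f x) (line 0) := h0 ▸ hfx.hasFDerivAt
  have hderiv : HasDerivAt (f ∘ line) (fderiv ℝ f x (y - x)) 0 :=
    hfx'.comp_hasDerivAt 0 AffineMap.hasDerivAt_lineMap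
  have hslope := (hf.comp_affineMap line).le_slope_of_hasDerivAt (Set.mem_univ 0)
    (Set.mem_univ 1) one_pos hderiv
  rw [slope_def_field, Function.comp_apply, Function.comp_apply, h0, h1, sub_zero,
    div_one] at hslope
  linarith

theorem ConvexOn.exists_norm_fderiv_le [FiniteDimensional ℝ E] (hf : ConvexOn ℝ Set.univ f)
    (r : ℝ) : ∃ K, ∀ x, ‖x‖ ≤ r → ‖fderiv ℝ f x‖ ≤ K := by
  have hbdd : Bornology.IsBounded (f '' Metric.ball 0 (r + 2)) :=
    ((isCompact_closedBall 0 (r + 2)).image_of_continuousOn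
      (hf.continuousOn isOpen_univ |>.mono (Set.subset_univ _))).isBounded.subset
      (Set.image_mono Metric.ball_subset_closedBall)
  have hball : ConvexOn ℝ (Metric.ball 0 (r + 2)) f :=
    hf.subset (Set.subset_univ _) (convex_ball 0 (r + 2))
  obtain ⟨K, hK⟩ := hball.exists_lipschitzOnWith_of_isBounded (by linarith : r + 1 < r + 2) hbdd
  refine ⟨K, fun x hx => norm_fderiv_le_of_lipschitzOn ℝ (Metric.isOpen_ball.mem_nhds ?_) hK⟩
  rw [mem_ball_zero_iff]
  linarith

end ConvexFDeriv

section TruncatedGradient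

variable {α E : Type*} [NormedAddCommGroup E] [InnerProductSpace ℝ E] [CompleteSpace E]

noncomputable def truncatedGradient (Φ : E → ℝ) (V : α → E) (r : ℝ) : α → E :=
  {x | ‖V x‖ ≤ r}.indicator fun x => ∇ Φ (V x)

theorem measurable_truncatedGradient [MeasurableSpace α] [FiniteDimensional ℝ E]
    [MeasurableSpace E] [BorelSpace E] (Φ : E → ℝ) {V : α → E} (hV : Measurable V) (r : ℝ) :
    Measurable (truncatedGradient Φ V r) :=
  (((InnerProductSpace.toDual ℝ E).symm.continuous.measurable.comp
    (measurable_fderiv ℝ Φ)).comp hV).indicator (measurableSet_le hV.norm measurable_const)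

theorem ConvexOn.exists_norm_truncatedGradient_le [FiniteDimensional ℝ E] {Φ : E → ℝ}
    (hΦ : ConvexOn ℝ Set.univ Φ) (V : α → E) (r : ℝ) :
    ∃ C, ∀ x, ‖truncatedGradient Φ V r x‖ ≤ C := by
  obtain ⟨K, hK⟩ := hΦ.exists_norm_fderiv_le r
  refine ⟨max K 0, fun x => ?_⟩
  by_cases hx : x ∈ {x | ‖V x‖ ≤ r}
  · rw [truncatedGradient, Set.indicator_of_mem hx, gradient, LinearIsometryEquiv.norm_map]
    exact (hK _ hx).trans (le_max_left _ _)
  · rw [truncatedGradient, Set.indicator_of_notMem hx, norm_zero]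
    exact le_max_right _ _

end TruncatedGradient

namespace IsNFunction

variable {n : ℕ} {Φ : EuclideanSpace ℝ (Fin n) → ℝ}

theorem continuous (hΦ : IsNFunction Φ) : Continuous Φ :=
  continuousOn_univ.1 (hΦ.convex.continuousOn isOpen_univ)

theorem exists_mul_norm_le (hΦ : IsNFunction Φ) (c : ℝ) :
    ∃ R, 0 < R ∧ ∀ ξ, R ≤ ‖ξ‖ → c * ‖ξ‖ ≤ Φ ξ := by
  obtain ⟨R, -, hR⟩ := hasBasis_cobounded_norm.eventually_iff.1
    (hΦ.tendsto_atTop.eventually_ge_atTop c)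
  refine ⟨max R 1, by positivity, fun ξ hξ => ?_⟩
  have hξ0 : 0 < ‖ξ‖ := one_pos.trans_le ((le_max_right R 1).trans hξ)
  exact (le_div_iff₀ hξ0).1 (hR ((le_max_left R 1).trans hξ))

theorem bddAbove_inner_sub (hΦ : IsNFunction Φ) (η : EuclideanSpace ℝ (Fin n)) :
    BddAbove (Set.range fun ξ => ⟪ξ, η⟫ - Φ ξ) := by
  obtain ⟨R, hR0, hR⟩ := hΦ.exists_mul_norm_le ‖η‖
  refine ⟨R * ‖η‖, Set.forall_mem_range.2 fun ξ => ?_⟩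
  have hinner : ⟪ξ, η⟫ ≤ ‖ξ‖ * ‖η‖ := real_inner_le_norm ξ η
  rcases le_total R ‖ξ‖ with hξ | hξ
  · nlinarith [hR ξ hξ, norm_nonneg η]
  · nlinarith [hΦ.nonneg ξ, norm_nonneg η]

theorem inner_sub_le_youngConjR (hΦ : IsNFunction Φ) (ξ η : EuclideanSpace ℝ (Fin n)) :
    ⟪ξ, η⟫ - Φ ξ ≤ youngConjR Φ η :=
  le_ciSup (hΦ.bddAbove_inner_sub η) ξ

theorem youngConjR_nonneg (hΦ : IsNFunction Φ) (η : EuclideanSpace ℝ (Fin n)) :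
    0 ≤ youngConjR Φ η := by
  simpa [hΦ.map_zero] using hΦ.inner_sub_le_youngConjR 0 η

theorem youngConjR_zero (hΦ : IsNFunction Φ) : youngConjR Φ 0 = 0 :=
  le_antisymm (ciSup_le fun ξ => by simpa using hΦ.nonneg ξ) (hΦ.youngConjR_nonneg 0)

theorem convexOn_youngConjR (hΦ : IsNFunction Φ) : ConvexOn ℝ Set.univ (youngConjR Φ) := by
  refine ⟨convex_univ, fun η₁ _ η₂ _ a b ha hb hab => ciSup_le fun ξ => ?_⟩
  have h₁ := mul_le_mul_of_nonneg_left (hΦ.inner_sub_le_youngConjR ξ η₁) ha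
  have h₂ := mul_le_mul_of_nonneg_left (hΦ.inner_sub_le_youngConjR ξ η₂) hb
  rw [inner_add_right, real_inner_smul_right, real_inner_smul_right, smul_eq_mul, smul_eq_mul]
  linear_combination h₁ + h₂ + Φ ξ * hab

theorem continuous_youngConjR (hΦ : IsNFunction Φ) : Continuous (youngConjR Φ) :=
  continuousOn_univ.1 (hΦ.convexOn_youngConjR.continuousOn isOpen_univ)

theorem youngConjR_gradient (hΦ : IsNFunction Φ) {ξ : EuclideanSpace ℝ (Fin n)}
    (hξ : DifferentiableAt ℝ Φ ξ) : youngConjR Φ (∇ Φ ξ) = ⟪ξ, ∇ Φ ξ⟫ - Φ ξ := by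
  refine le_antisymm (ciSup_le fun ζ => ?_) (hΦ.inner_sub_le_youngConjR ξ _)
  have := hΦ.convex.add_fderiv_sub_le hξ ζ
  rw [← inner_gradient_left, inner_sub_right, real_inner_comm ζ, real_inner_comm ξ] at this
  linarith

variable {α : Type*}

theorem inner_truncatedGradient (hΦ : IsNFunction Φ) (hdiff : Differentiable ℝ Φ)
    (V : α → EuclideanSpace ℝ (Fin n)) (r : ℝ) (x : α) :
    ⟪truncatedGradient Φ V r x, V x⟫ =
      youngConjR Φ (truncatedGradient Φ V r x) +
        {x | ‖V x‖ ≤ r}.indicator (fun x => Φ (V x)) x := by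
  unfold truncatedGradient
  by_cases hx : x ∈ {x | ‖V x‖ ≤ r}
  · rw [Set.indicator_of_mem hx, Set.indicator_of_mem hx, hΦ.youngConjR_gradient (hdiff _),
      real_inner_comm]
    ring
  · rw [Set.indicator_of_notMem hx, Set.indicator_of_notMem hx, hΦ.youngConjR_zero,
      inner_zero_left, zero_add]

variable [MeasurableSpace α] {μ : Measure α} [IsFiniteMeasure μ]

theorem ofReal_integral_inner_sub_youngConjR_le (hΦ : IsNFunction Φ)
    {U : α → EuclideanSpace ℝ (Fin n)} (hU : AEStronglyMeasurable U μ) {C : ℝ}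
    (hUC : ∀ᵐ x ∂μ, ‖U x‖ ≤ C) (V : α → EuclideanSpace ℝ (Fin n)) :
    ENNReal.ofReal ((∫ x, ⟪U x, V x⟫ ∂μ) - ∫ x, youngConjR Φ (U x) ∂μ) ≤
      ∫⁻ x, ENNReal.ofReal (Φ (V x)) ∂μ := by
  have hconj := hΦ.continuous_youngConjR.integrable_comp_of_ae_norm_le hU hUC
  by_cases hpair : Integrable (fun x => ⟪U x, V x⟫) μ
  · rw [← integral_sub hpair hconj]
    refine (ofReal_integral_le_lintegral_ofReal _).trans
      (lintegral_mono fun x => ENNReal.ofReal_le_ofReal ?_)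
    have := hΦ.inner_sub_le_youngConjR (V x) (U x)
    rw [real_inner_comm] at this
    linarith
  -- the Bochner integral of the non-integrable pairing is `0`
  · rw [integral_undef hpair, zero_sub, ENNReal.ofReal_of_nonpos
      (neg_nonpos.2 (integral_nonneg fun x => hΦ.youngConjR_nonneg _))]
    exact bot_le

theorem ofReal_integral_inner_truncatedGradient_sub (hΦ : IsNFunction Φ)
    (hdiff : Differentiable ℝ Φ) {V : α → EuclideanSpace ℝ (Fin n)} (hV : Measurable V)
    (r : ℝ) :
    ENNReal.ofReal ((∫ x, ⟪truncatedGradient Φ V r x, V x⟫ ∂μ) -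
        ∫ x, youngConjR Φ (truncatedGradient Φ V r x) ∂μ) =
      ∫⁻ x in {x | ‖V x‖ ≤ r}, ENNReal.ofReal (Φ (V x)) ∂μ := by
  set S := {x | ‖V x‖ ≤ r}
  have hS : MeasurableSet S := measurableSet_le hV.norm measurable_const
  obtain ⟨C, hC⟩ := hΦ.convex.exists_norm_truncatedGradient_le V r
  have hconj : Integrable (fun x => youngConjR Φ (truncatedGradient Φ V r x)) μ :=
    hΦ.continuous_youngConjR.integrable_comp_of_ae_norm_le
      (measurable_truncatedGradient Φ hV r).aestronglyMeasurable (ae_of_all _ hC)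
  have hΦV : IntegrableOn (fun x => Φ (V x)) S μ :=
    hΦ.continuous.integrable_comp_of_ae_norm_le hV.aestronglyMeasurable
      (ae_restrict_of_forall_mem hS fun _ hx => hx)
  rw [integral_congr_ae (ae_of_all _ (hΦ.inner_truncatedGradient hdiff V r)),
    integral_add hconj (hΦV.integrable_indicator hS), add_sub_cancel_left,
    integral_indicator hS,
    ofReal_integral_eq_lintegral_ofReal hΦV (ae_of_all _ fun x => hΦ.nonneg _)]

end IsNFunction

theorem iSup_pairing_sub_conj_eq_integral_general {n : ℕ}
    (Ω : Set (EuclideanSpace ℝ (Fin n)))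
    (hΩb : Bornology.IsBounded Ω)
    (Φ : EuclideanSpace ℝ (Fin n) → ℝ) (hΦ : IsNFunction Φ)
    (hdiff : Differentiable ℝ Φ)
    (V : EuclideanSpace ℝ (Fin n) → EuclideanSpace ℝ (Fin n))
    (hV : Measurable V) :
    (⨆ U : {U : EuclideanSpace ℝ (Fin n) → EuclideanSpace ℝ (Fin n) //
        Measurable U ∧ ∃ C : ℝ, ∀ᵐ x ∂(volume.restrict Ω), ‖U x‖ ≤ C},
      ENNReal.ofReal
        ((∫ x in Ω, ⟪U.1 x, V x⟫) - ∫ x in Ω, youngConjR Φ (U.1 x))) =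
      ∫⁻ x in Ω, ENNReal.ofReal (Φ (V x)) := by
  have : IsFiniteMeasure (volume.restrict Ω) :=
    isFiniteMeasure_restrict.2 hΩb.measure_lt_top.ne
  refine le_antisymm (iSup_le fun ⟨U, hU, C, hC⟩ =>
    hΦ.ofReal_integral_inner_sub_youngConjR_le hU.aestronglyMeasurable hC V) ?_
  rw [lintegral_eq_iSup_setLIntegral_norm_le V]
  refine iSup_le fun m => ?_
  obtain ⟨C, hC⟩ := hΦ.convex.exists_norm_truncatedGradient_le V m
  rw [← hΦ.ofReal_integral_inner_truncatedGradient_sub hdiff hV]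
  exact le_iSup_of_le ⟨_, measurable_truncatedGradient Φ hV m, C, ae_of_all _ hC⟩ le_rfl

/-- For a `C¹` `n`-dimensional `N`-function `Φ` and `V` in the Orlicz class on a
bounded measurable set `Ω`, the supremum over measurable essentially bounded
`U : Ω → ℝⁿ` of `∫_Ω U·V dx − ∫_Ω Φ_•(U) dx` equals `∫_Ω Φ(V) dx` in `[0,∞]`. -/
theorem iSup_pairing_sub_conj_eq_integral {n : ℕ}
    (Ω : Set (EuclideanSpace ℝ (Fin n))) (hΩm : MeasurableSet Ω)
    (hΩb : Bornology.IsBounded Ω)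
    (Φ : EuclideanSpace ℝ (Fin n) → ℝ) (hΦ : IsNFunction Φ)
    (hdiff : Differentiable ℝ Φ)
    (V : EuclideanSpace ℝ (Fin n) → EuclideanSpace ℝ (Fin n))
    (hV : Measurable V) (k : ℝ) (hk : 0 < k)
    (hVk : ∫⁻ x in Ω, ENNReal.ofReal (Φ (k⁻¹ • V x)) < ⊤) :
    (⨆ U : {U : EuclideanSpace ℝ (Fin n) → EuclideanSpace ℝ (Fin n) //
        Measurable U ∧ ∃ C : ℝ, ∀ᵐ x ∂(volume.restrict Ω), ‖U x‖ ≤ C},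
      ENNReal.ofReal
        ((∫ x in Ω, ⟪U.1 x, V x⟫) - ∫ x in Ω, youngConjR Φ (U.1 x))) =
      ∫⁻ x in Ω, ENNReal.ofReal (Φ (V x)) :=
  iSup_pairing_sub_conj_eq_integral_general Ω hΩb Φ hΦ hdiff V hV
end

section
/- Let Ω ⊂ ℝⁿ be a set of finite Lebesgue measure, let B : ℝ → [0,∞) be a 1-dimensional N-function, and let u_h, u : Ω → ℝ be measurable functions such that ∫_Ω B(2(u_h − u)) dx → 0 as h → ∞ and ∫_Ω B(2u) dx < ∞. Then ∫_Ω B(u_h) dx → ∫_Ω B(u) dx as h → ∞. -/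
open MeasureTheory Filter Topology
open scoped RealInnerProductSpace ENNReal

/-- A `1`-dimensional `N`-function `B(t) = ∫₀^{|t|} b(τ) dτ`, where
`b : [0,∞) → [0,∞)` is increasing, right-continuous, positive for `τ > 0`,
vanishes at `0` and tends to `+∞` at `+∞`. -/
structure IsNFunction1 (b : ℝ → ℝ) (B : ℝ → ℝ) : Prop where
  nonneg : ∀ τ, 0 ≤ τ → 0 ≤ b τ
  mono : MonotoneOn b (Set.Ici 0)
  right_continuous : ∀ τ, 0 ≤ τ → ContinuousWithinAt b (Set.Ici τ) τ
  map_zero : b 0 = 0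
  pos : ∀ τ, 0 < τ → 0 < b τ
  tendsto_atTop : Tendsto b atTop atTop
  eq_int : ∀ t, B t = ∫ τ in (0:ℝ)..|t|, b τ

namespace IsNFunction1

lemma intInt (hB : IsNFunction1 b B) {s t : ℝ} (hs : 0 ≤ s) (ht : 0 ≤ t) :
    IntervalIntegrable b volume s t :=
  (hB.mono.mono (fun x hx => le_trans (le_min hs ht) hx.1)).intervalIntegrable

lemma B_abs (hB : IsNFunction1 b B) (t : ℝ) : B t = B |t| := by
  rw [hB.eq_int, hB.eq_int, abs_abs]

lemma B_zero (hB : IsNFunction1 b B) : B 0 = 0 := by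
  rw [hB.eq_int]; simp

lemma B_nonneg (hB : IsNFunction1 b B) (t : ℝ) : 0 ≤ B t := by
  rw [hB.eq_int]
  exact intervalIntegral.integral_nonneg (abs_nonneg t) (fun x hx => hB.nonneg x hx.1)

lemma B_eq_add (hB : IsNFunction1 b B) {s t : ℝ} (hs : 0 ≤ s) (hst : s ≤ t) :
    B t = B s + ∫ τ in s..t, b τ := by
  rw [hB.eq_int, hB.eq_int, abs_of_nonneg hs, abs_of_nonneg (hs.trans hst)]
  exact (intervalIntegral.integral_add_adjacent_intervals (hB.intInt le_rfl hs)
    (hB.intInt hs (hs.trans hst))).symm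

lemma B_mono (hB : IsNFunction1 b B) {s t : ℝ} (hs : 0 ≤ s) (hst : s ≤ t) :
    B s ≤ B t := by
  rw [hB.B_eq_add hs hst]
  have : 0 ≤ ∫ τ in s..t, b τ :=
    intervalIntegral.integral_nonneg hst (fun x hx => hB.nonneg x (hs.trans hx.1))
  linarith

lemma B_pos (hB : IsNFunction1 b B) {t : ℝ} (ht : 0 < t) : 0 < B t := by
  have h2 : (0:ℝ) < t / 2 := by linarith
  rw [hB.B_eq_add h2.le (by linarith)]
  have hc : ∀ x ∈ Set.Icc (t/2) t, b (t/2) ≤ b x := fun x hx =>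
    hB.mono (Set.mem_Ici.2 h2.le) (Set.mem_Ici.2 (h2.le.trans hx.1)) hx.1
  have := intervalIntegral.integral_mono_on (by linarith : t/2 ≤ t)
    (intervalIntegrable_const) (hB.intInt h2.le ht.le) hc
  rw [intervalIntegral.integral_const] at this
  have hb := hB.pos _ h2
  have hBn := hB.B_nonneg (t/2)
  have : (t - t/2) * b (t/2) ≤ ∫ τ in (t/2)..t, b τ := by simpa using this
  nlinarith

lemma B_midpoint (hB : IsNFunction1 b B) {s t : ℝ} (hs : 0 ≤ s) (hst : s ≤ t) :
    B ((s + t)/2) ≤ (B s + B t)/2 := by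
  set m := (s + t)/2 with hm
  have hsm : s ≤ m := by rw [hm]; linarith
  have hmt : m ≤ t := by rw [hm]; linarith
  have hm0 : 0 ≤ m := hs.trans hsm
  have e1 : B m = B s + ∫ τ in s..m, b τ := hB.B_eq_add hs hsm
  have e2 : B t = B m + ∫ τ in m..t, b τ := hB.B_eq_add hm0 hmt
  have h1 : ∫ τ in s..m, b τ ≤ (m - s) * b m := by
    have := intervalIntegral.integral_mono_on hsm (hB.intInt hs hm0)
      (intervalIntegrable_const) (fun x hx => hB.mono (Set.mem_Ici.2 (hs.trans hx.1))
        (Set.mem_Ici.2 hm0) hx.2)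
    simpa using this
  have h2 : (t - m) * b m ≤ ∫ τ in m..t, b τ := by
    have := intervalIntegral.integral_mono_on hmt (intervalIntegrable_const)
      (hB.intInt hm0 (hm0.trans hmt)) (fun x hx => hB.mono (Set.mem_Ici.2 hm0)
        (Set.mem_Ici.2 (hm0.trans hx.1)) hx.1)
    simpa using this
  have hms : m - s = t - m := by rw [hm]; ring
  have h3 : (m - s) * b m = (t - m) * b m := by rw [hms]
  linarith

lemma B_convex_half (hB : IsNFunction1 b B) (a c : ℝ) :
    B ((a + c)/2) ≤ (B a + B c)/2 := by
  set s := min |a| |c| with hsdef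
  set t := max |a| |c| with htdef
  have hs : 0 ≤ s := le_min (abs_nonneg a) (abs_nonneg c)
  have hst : s ≤ t := min_le_max
  have habs : |(a + c)/2| ≤ (s + t)/2 := by
    have : s + t = |a| + |c| := min_add_max _ _
    rw [this]
    calc |(a + c)/2| = |a + c|/2 := by rw [abs_div]; norm_num
    _ ≤ (|a| + |c|)/2 := by linarith [abs_add_le a c]
  have h1 : B ((a + c)/2) ≤ B ((s + t)/2) := by
    rw [hB.B_abs ((a+c)/2)]
    exact hB.B_mono (abs_nonneg _) (habs.trans_eq rfl) |>.trans
      (hB.B_mono (by linarith) le_rfl)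
  have h2 : B s + B t = B a + B c := by
    rcases le_total |a| |c| with h | h
    · rw [hsdef, htdef, min_eq_left h, max_eq_right h, ← hB.B_abs, ← hB.B_abs]
    · rw [hsdef, htdef, min_eq_right h, max_eq_left h, ← hB.B_abs, ← hB.B_abs]; ring
  calc B ((a + c)/2) ≤ B ((s + t)/2) := h1
  _ ≤ (B s + B t)/2 := hB.B_midpoint hs hst
  _ = (B a + B c)/2 := by rw [h2]

lemma B_continuous (hB : IsNFunction1 b B) : Continuous B := by
  have hBeq : B = (fun s => ∫ τ in (0:ℝ)..s, b τ) ∘ (fun t => |t|) := funext hB.eq_int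
  rw [hBeq]
  refine ContinuousOn.comp_continuous (s := Set.Ici 0) ?_ continuous_abs
    (fun x => abs_nonneg x)
  intro x hx
  have hx0 : (0:ℝ) ≤ x := hx
  have hIcc : Set.uIcc (0:ℝ) (x + 1) = Set.Icc 0 (x + 1) :=
    Set.uIcc_of_le (by linarith)
  have hint : IntegrableOn b (Set.uIcc (0:ℝ) (x+1)) volume := by
    rw [hIcc, integrableOn_Icc_iff_integrableOn_Ioc]
    exact (hB.intInt le_rfl (by linarith : (0:ℝ) ≤ x + 1)).1
  have hcont := intervalIntegral.continuousOn_primitive_interval hint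
  have hxmem : x ∈ Set.uIcc (0:ℝ) (x+1) := by rw [hIcc]; exact ⟨hx0, by linarith⟩
  have := hcont x hxmem
  refine this.mono_of_mem_nhdsWithin ?_
  rw [hIcc]
  have : Set.Icc (0:ℝ) (x+1) = Set.Ici 0 ∩ Set.Iic (x+1) := (Set.Ici_inter_Iic).symm
  rw [this]
  exact Filter.inter_mem self_mem_nhdsWithin
    (mem_nhdsWithin_of_mem_nhds (Iic_mem_nhds (by linarith)))

lemma tendsto_zero_of_B_tendsto_zero (hB : IsNFunction1 b B) {r : ℕ → ℝ}
    (h : Tendsto (fun k => B (r k)) atTop (𝓝 0)) : Tendsto r atTop (𝓝 0) := by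
  rw [Metric.tendsto_atTop]
  intro ε hε
  have hBε : 0 < B ε := hB.B_pos hε
  have := (h.eventually (Iio_mem_nhds hBε)).and (Filter.eventually_atTop.2 ⟨0, fun _ _ => trivial⟩)
  rcases Filter.eventually_atTop.1 (h.eventually (Iio_mem_nhds hBε)) with ⟨N, hN⟩
  refine ⟨N, fun n hn => ?_⟩
  rw [Real.dist_eq, sub_zero]
  by_contra hcon
  push_neg at hcon
  have : B ε ≤ B (r n) := by
    rw [hB.B_abs (r n)]
    exact hB.B_mono hε.le hcon
  exact absurd (hN n hn) (not_lt.2 this)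

end IsNFunction1

/-- If `∫_Ω B(2(u_h − u)) dx → 0` and `∫_Ω B(2u) dx < ∞` on a set `Ω` of finite
measure, where `B` is a `1`-dimensional `N`-function, then
`∫_Ω B(u_h) dx → ∫_Ω B(u) dx`. -/
theorem tendsto_integral_of_mean_convergence {n : ℕ}
    (Ω : Set (EuclideanSpace ℝ (Fin n))) (hΩm : MeasurableSet Ω)
    (hΩ : volume Ω < ⊤)
    (b B : ℝ → ℝ) (hB : IsNFunction1 b B)
    (u : ℕ → EuclideanSpace ℝ (Fin n) → ℝ) (v : EuclideanSpace ℝ (Fin n) → ℝ)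
    (hu : ∀ h, Measurable (u h)) (hv : Measurable v)
    (hmean : Tendsto
      (fun h => ∫⁻ x in Ω, ENNReal.ofReal (B (2 * (u h x - v x)))) atTop (𝓝 0))
    (hfin : ∫⁻ x in Ω, ENNReal.ofReal (B (2 * v x)) < ⊤) :
    Tendsto (fun h => ∫⁻ x in Ω, ENNReal.ofReal (B (u h x))) atTop
      (𝓝 (∫⁻ x in Ω, ENNReal.ofReal (B (v x)))) := by
  have hBc : Continuous B := hB.B_continuous
  have hmF : ∀ h : ℕ, Measurable fun x => ENNReal.ofReal (B (2 * (u h x - v x))) :=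
    fun h => ENNReal.measurable_ofReal.comp (hBc.measurable.comp (((hu h).sub hv).const_mul 2))
  have hmG : Measurable fun x : EuclideanSpace ℝ (Fin n) => ENNReal.ofReal (B (2 * v x)) :=
    ENNReal.measurable_ofReal.comp (hBc.measurable.comp (hv.const_mul 2))
  have hmf : ∀ h : ℕ, Measurable fun x => ENNReal.ofReal (B (u h x)) :=
    fun h => ENNReal.measurable_ofReal.comp (hBc.measurable.comp (hu h))
  have hdom : ∀ (h : ℕ) x, ENNReal.ofReal (B (u h x)) ≤
      ENNReal.ofReal (B (2 * (u h x - v x))) + ENNReal.ofReal (B (2 * v x)) := by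
    intro h x
    have key := hB.B_convex_half (2 * (u h x - v x)) (2 * v x)
    have harg : (2 * (u h x - v x) + 2 * v x) / 2 = u h x := by ring
    rw [harg] at key
    have h1 : B (u h x) ≤ B (2 * (u h x - v x)) + B (2 * v x) := by
      have := hB.B_nonneg (2 * (u h x - v x)); have := hB.B_nonneg (2 * v x); linarith
    calc ENNReal.ofReal (B (u h x))
        ≤ ENNReal.ofReal (B (2 * (u h x - v x)) + B (2 * v x)) :=
          ENNReal.ofReal_le_ofReal h1
      _ = _ := ENNReal.ofReal_add (hB.B_nonneg _) (hB.B_nonneg _)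
  have hvle : ∀ x, ENNReal.ofReal (B (v x)) ≤ ENNReal.ofReal (B (2 * v x)) := by
    intro x
    refine ENNReal.ofReal_le_ofReal ?_
    have key := hB.B_convex_half 0 (2 * v x)
    rw [hB.B_zero] at key
    have harg : ((0:ℝ) + 2 * v x) / 2 = v x := by ring
    rw [harg] at key
    have := hB.B_nonneg (2 * v x); linarith
  apply Filter.tendsto_of_subseq_tendsto
  intro ns hns
  have hA : Tendsto (fun k => ∫⁻ x in Ω, ENNReal.ofReal (B (2 * (u (ns k) x - v x))))
      atTop (𝓝 0) := hmean.comp hns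
  have hpow : ∀ m : ℕ, (0:ℝ≥0∞) < 2⁻¹ ^ m := fun m =>
    ENNReal.pow_pos (ENNReal.inv_pos.2 ENNReal.ofNat_ne_top) m
  obtain ⟨φ, hφm, hφ⟩ := Filter.extraction_forall_of_eventually
    (P := fun m k => (∫⁻ x in Ω, ENNReal.ofReal (B (2 * (u (ns k) x - v x)))) ≤ (2:ℝ≥0∞)⁻¹ ^ m)
    (fun m => (hA.eventually (Iio_mem_nhds (hpow m))).mono fun k hk => hk.le)
  have hsum : (∑' m : ℕ, ∫⁻ x in Ω, ENNReal.ofReal (B (2 * (u (ns (φ m)) x - v x)))) ≠ ⊤ := by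
    have hle := ENNReal.tsum_le_tsum hφ
    have hgeo : (∑' m : ℕ, (2:ℝ≥0∞)⁻¹ ^ m) ≠ ⊤ := by
      rw [ENNReal.tsum_geometric, ENNReal.one_sub_inv_two]
      simp
    exact ne_top_of_le_ne_top hgeo hle
  have htsum_meas : Measurable fun x : EuclideanSpace ℝ (Fin n) =>
      ∑' m : ℕ, ENNReal.ofReal (B (2 * (u (ns (φ m)) x - v x))) :=
    Measurable.ennreal_tsum (fun m => hmF (ns (φ m)))
  have hlt : (∫⁻ x in Ω, ∑' m : ℕ, ENNReal.ofReal (B (2 * (u (ns (φ m)) x - v x)))) ≠ ⊤ := by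
    rw [lintegral_tsum (fun m => (hmF (ns (φ m))).aemeasurable)]
    exact hsum
  have hae0 : ∀ᵐ x ∂(volume.restrict Ω),
      Tendsto (fun m => ENNReal.ofReal (B (2 * (u (ns (φ m)) x - v x)))) atTop (𝓝 0) := by
    filter_upwards [ae_lt_top htsum_meas hlt] with x hx
    exact ENNReal.tendsto_atTop_zero_of_tsum_ne_top hx.ne
  have haef : ∀ᵐ x ∂(volume.restrict Ω),
      Tendsto (fun m => ENNReal.ofReal (B (u (ns (φ m)) x))) atTop
        (𝓝 (ENNReal.ofReal (B (v x)))) := by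
    filter_upwards [hae0] with x hx
    have h1 : Tendsto (fun m => B (2 * (u (ns (φ m)) x - v x))) atTop (𝓝 0) := by
      have h2 := (ENNReal.tendsto_toReal (by simp : (0:ℝ≥0∞) ≠ ⊤)).comp hx
      simpa [Function.comp_def, ENNReal.toReal_ofReal (hB.B_nonneg _)] using h2
    have h2 := hB.tendsto_zero_of_B_tendsto_zero h1
    have h5 : Tendsto (fun m => u (ns (φ m)) x - v x) atTop (𝓝 0) := by
      have h4 := h2.const_mul ((2:ℝ)⁻¹)
      rw [mul_zero] at h4
      exact h4.congr fun m => by ring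
    have h3 : Tendsto (fun m => u (ns (φ m)) x) atTop (𝓝 (v x)) := by
      have h6 := h5.add (tendsto_const_nhds (x := v x) (f := atTop))
      rw [zero_add] at h6
      exact h6.congr fun m => by ring
    exact (ENNReal.continuous_ofReal.tendsto _).comp ((hBc.tendsto _).comp h3)
  refine ⟨φ, ?_⟩
  have hψm : ∀ m : ℕ, Measurable fun x => min (ENNReal.ofReal (B (u (ns (φ m)) x)))
      (ENNReal.ofReal (B (2 * v x))) := fun m => (hmf (ns (φ m))).min hmG
  have hψint : Tendsto (fun m => ∫⁻ x in Ω, min (ENNReal.ofReal (B (u (ns (φ m)) x)))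
      (ENNReal.ofReal (B (2 * v x)))) atTop (𝓝 (∫⁻ x in Ω, ENNReal.ofReal (B (v x)))) := by
    refine tendsto_lintegral_of_dominated_convergence
      (fun x => ENNReal.ofReal (B (2 * v x))) hψm
      (fun m => Filter.Eventually.of_forall fun x => min_le_right _ _) hfin.ne ?_
    filter_upwards [haef] with x hx
    have h7 := hx.min (tendsto_const_nhds (x := ENNReal.ofReal (B (2 * v x))) (f := atTop))
    rwa [min_eq_left (hvle x)] at h7
  have hlow : ∀ m : ℕ, (∫⁻ x in Ω, min (ENNReal.ofReal (B (u (ns (φ m)) x)))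
      (ENNReal.ofReal (B (2 * v x)))) ≤ ∫⁻ x in Ω, ENNReal.ofReal (B (u (ns (φ m)) x)) :=
    fun m => lintegral_mono fun x => min_le_left _ _
  have hup : ∀ m : ℕ, (∫⁻ x in Ω, ENNReal.ofReal (B (u (ns (φ m)) x))) ≤
      (∫⁻ x in Ω, min (ENNReal.ofReal (B (u (ns (φ m)) x))) (ENNReal.ofReal (B (2 * v x)))) +
      ∫⁻ x in Ω, ENNReal.ofReal (B (2 * (u (ns (φ m)) x - v x))) := by
    intro m
    rw [← lintegral_add_left (hψm m)]
    refine lintegral_mono fun x => ?_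
    rcases le_total (ENNReal.ofReal (B (u (ns (φ m)) x))) (ENNReal.ofReal (B (2 * v x))) with h | h
    · rw [min_eq_left h]
      exact le_self_add
    · rw [min_eq_right h]
      calc ENNReal.ofReal (B (u (ns (φ m)) x))
          ≤ ENNReal.ofReal (B (2 * (u (ns (φ m)) x - v x))) + ENNReal.ofReal (B (2 * v x)) :=
            hdom (ns (φ m)) x
        _ = ENNReal.ofReal (B (2 * v x)) + ENNReal.ofReal (B (2 * (u (ns (φ m)) x - v x))) :=
            add_comm _ _
  have hAφ : Tendsto (fun m => ∫⁻ x in Ω, ENNReal.ofReal (B (2 * (u (ns (φ m)) x - v x))))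
      atTop (𝓝 0) := hA.comp hφm.tendsto_atTop
  have hupt : Tendsto (fun m => (∫⁻ x in Ω, min (ENNReal.ofReal (B (u (ns (φ m)) x)))
      (ENNReal.ofReal (B (2 * v x)))) +
      ∫⁻ x in Ω, ENNReal.ofReal (B (2 * (u (ns (φ m)) x - v x)))) atTop
      (𝓝 (∫⁻ x in Ω, ENNReal.ofReal (B (v x)))) := by
    simpa using hψint.add hAφ
  exact tendsto_of_tendsto_of_tendsto_of_le_of_le hψint hupt hlow hup
end
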